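/- Let G = (V, F, w) be a weighted multigraph and let ∅ ⊊ S ⊊ V be a cut such that the set δ(S) of edges crossing S is nonempty. Let k* := max_{f ∈ δ(S)} k_f be the maximum strength of an edge crossing S. Then the total weight of the edges crossing S whose strength equals k* is at least k*, i.e., Σ_{f ∈ δ(S) : k_f = k*} w(f) ≥ k*. -/
import Mathlib


open Finset
open scoped Classical

/-- An edge `f` crosses the cut `S` if exactly one of its endpoints lies in `S`. -/
def crossesCut {V F : Type} (ep : F → V × V) (S : Finset V) (f : F) : Prop :=
  ((ep f).1 ∈ S ∧ (ep f).2 ∉ S) ∨ ((ep f).1 ∉ S ∧ (ep f).2 ∈ S)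

/-- Total weight of edges of the induced subgraph `G[X]` crossing the cut `S`. -/
noncomputable def cutWt {V F : Type} [Fintype F] (ep : F → V × V) (w : F → ℝ)
    (X S : Finset V) : ℝ :=
  ∑ f : F, if (ep f).1 ∈ X ∧ (ep f).2 ∈ X ∧ crossesCut ep S f then w f else 0

/-- The min-cut of the induced subgraph `G[X]`: the least total weight of edges of `G[X]`
crossing a cut `(S, X \ S)` with `∅ ⊊ S ⊊ X`. -/
noncomputable def minCutIn {V F : Type} [Fintype F] (ep : F → V × V) (w : F → ℝ)
    (X : Finset V) : ℝ :=
  sInf {c : ℝ | ∃ S : Finset V, S ⊆ X ∧ S.Nonempty ∧ S ≠ X ∧ c = cutWt ep w X S}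

/-- The strength of an edge `f`: the maximum of the min-cut of `G[X]` over all vertex
sets `X` containing both endpoints of `f`. -/
noncomputable def strength {V F : Type} [Fintype V] [Fintype F] (ep : F → V × V)
    (w : F → ℝ) (f : F) : ℝ :=
  sSup {c : ℝ | ∃ X : Finset V, (ep f).1 ∈ X ∧ (ep f).2 ∈ X ∧ c = minCutIn ep w X}

lemma cutWt_nonneg {V F : Type} [Fintype F] (ep : F → V × V) (w : F → ℝ)
    (hw : ∀ f, 0 ≤ w f) (X S : Finset V) : 0 ≤ cutWt ep w X S := by
  apply Finset.sum_nonneg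
  intro f _
  split <;> [exact hw f; exact le_rfl]

lemma strengthSet_finite {V F : Type} [Fintype V] [Fintype F] (ep : F → V × V)
    (w : F → ℝ) (f : F) :
    {c : ℝ | ∃ X : Finset V, (ep f).1 ∈ X ∧ (ep f).2 ∈ X ∧ c = minCutIn ep w X}.Finite := by
  apply Set.Finite.subset (Set.finite_range (fun X : Finset V => minCutIn ep w X))
  rintro c ⟨X, _, _, rfl⟩
  exact ⟨X, rfl⟩

lemma strengthSet_nonempty {V F : Type} [Fintype V] [Fintype F] (ep : F → V × V)
    (w : F → ℝ) (f : F) :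
    {c : ℝ | ∃ X : Finset V, (ep f).1 ∈ X ∧ (ep f).2 ∈ X ∧ c = minCutIn ep w X}.Nonempty :=
  ⟨minCutIn ep w Finset.univ, Finset.univ, Finset.mem_univ _, Finset.mem_univ _, rfl⟩

lemma strength_mem {V F : Type} [Fintype V] [Fintype F] (ep : F → V × V)
    (w : F → ℝ) (f : F) :
    ∃ X : Finset V, (ep f).1 ∈ X ∧ (ep f).2 ∈ X ∧ strength ep w f = minCutIn ep w X :=
  Set.Nonempty.csSup_mem (strengthSet_nonempty ep w f) (strengthSet_finite ep w f)

lemma minCutIn_le_strength {V F : Type} [Fintype V] [Fintype F] (ep : F → V × V)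
    (w : F → ℝ) (f : F) (X : Finset V) (h1 : (ep f).1 ∈ X) (h2 : (ep f).2 ∈ X) :
    minCutIn ep w X ≤ strength ep w f :=
  le_csSup (strengthSet_finite ep w f).bddAbove ⟨X, h1, h2, rfl⟩

lemma minCutIn_le_cutWt {V F : Type} [Fintype F] (ep : F → V × V) (w : F → ℝ)
    (hw : ∀ f, 0 ≤ w f) (X S : Finset V) (hsub : S ⊆ X) (hne : S.Nonempty) (hne' : S ≠ X) :
    minCutIn ep w X ≤ cutWt ep w X S := by
  apply csInf_le
  · exact ⟨0, by rintro c ⟨T, _, _, _, rfl⟩; exact cutWt_nonneg ep w hw X T⟩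
  · exact ⟨S, hsub, hne, hne', rfl⟩

/-- Let `S` be a cut of a weighted multigraph and let `fstar` be an edge of
maximum strength among the edges crossing `S`. Then the total weight of the crossing edges
whose strength equals that maximum is at least the maximum strength itself. -/
theorem stmt15 {V F : Type} [Fintype V] [Fintype F]
    (ep : F → V × V) (hep : ∀ f, (ep f).1 ≠ (ep f).2)
    (w : F → ℝ) (hw : ∀ f, 0 ≤ w f)
    (S : Finset V) (hS : S.Nonempty) (hS' : S ≠ Finset.univ)
    (fstar : F) (hfstar : crossesCut ep S fstar)
    (hmax : ∀ g : F, crossesCut ep S g → strength ep w g ≤ strength ep w fstar) :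
    strength ep w fstar ≤
      ∑ g : F, if crossesCut ep S g ∧ strength ep w g = strength ep w fstar
        then w g else 0 := by
  obtain ⟨X, hX1, hX2, hXeq⟩ := strength_mem ep w fstar
  -- S ∩ X is a nonempty proper subset of X
  have hne : (S ∩ X).Nonempty := by
    rcases hfstar with ⟨h1, h2⟩ | ⟨h1, h2⟩
    · exact ⟨(ep fstar).1, Finset.mem_inter.mpr ⟨h1, hX1⟩⟩
    · exact ⟨(ep fstar).2, Finset.mem_inter.mpr ⟨h2, hX2⟩⟩
  have hne' : S ∩ X ≠ X := by
    intro h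
    rcases hfstar with ⟨h1, h2⟩ | ⟨h1, h2⟩
    · exact h2 (Finset.mem_inter.mp (h ▸ hX2)).1
    · exact h1 (Finset.mem_inter.mp (h ▸ hX1)).1
  have key : cutWt ep w X (S ∩ X) ≤
      ∑ g : F, if crossesCut ep S g ∧ strength ep w g = strength ep w fstar
        then w g else 0 := by
    apply Finset.sum_le_sum
    intro f _
    by_cases hf : (ep f).1 ∈ X ∧ (ep f).2 ∈ X ∧ crossesCut ep (S ∩ X) f
    · obtain ⟨hf1, hf2, hcross⟩ := hf
      have hcrossS : crossesCut ep S f := by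
        rcases hcross with ⟨h1, h2⟩ | ⟨h1, h2⟩
        · exact Or.inl ⟨(Finset.mem_inter.mp h1).1,
            fun hs => h2 (Finset.mem_inter.mpr ⟨hs, hf2⟩)⟩
        · exact Or.inr ⟨fun hs => h1 (Finset.mem_inter.mpr ⟨hs, hf1⟩),
            (Finset.mem_inter.mp h2).1⟩
      have hstr : strength ep w f = strength ep w fstar :=
        le_antisymm (hmax f hcrossS)
          (hXeq ▸ minCutIn_le_strength ep w f X hf1 hf2)
      simp only [hf1, hf2, hcross, hcrossS, hstr, and_self, if_true, true_and]
      simp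
    · simp only [hf, if_false]
      split <;> [exact hw f; exact le_rfl]
  calc strength ep w fstar = minCutIn ep w X := hXeq
    _ ≤ cutWt ep w X (S ∩ X) :=
        minCutIn_le_cutWt ep w hw X (S ∩ X) Finset.inter_subset_right hne hne'
    _ ≤ _ := key
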